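/- arXiv:1107.1375 — 6 statements merged into one kernel-verified Lean document; each statement's English description precedes it below -/
import Mathlib

section
/- If σ is a proper twist on G and x is an element of the real twisted group algebra, and p ∈ G satisfies p = p⁻¹, then (1 - σ(p,p))·⟨x, i_p x⟩ = 0, where ⟨·,·⟩ is the standard inner product with respect to the basis {i_q}. In particular, if σ(p,p) = -1 then ⟨x, i_p x⟩ = 0. -/
open Finset

/-- The twisted group algebra product on `G → ℝ`. -/
def tmul {G : Type*} [Group G] [Fintype G]
    (σ : G → G → ℝ) (x y : G → ℝ) : G → ℝ :=
  fun r => ∑ p : G, σ p (p⁻¹ * r) * x p * y (p⁻¹ * r)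

/-- The basis element `i_p`. -/
def ib {G : Type*} [Group G] [DecidableEq G] (p : G) : G → ℝ :=
  fun q => if q = p then 1 else 0

/-- The inner product `⟨x,y⟩ = ∑_q x_q y_q`. -/
def ip {G : Type*} [Fintype G] (x y : G → ℝ) : ℝ := ∑ q : G, x q * y q

theorem stmt9 {G : Type*} [Group G] [Fintype G] [DecidableEq G]
    (σ : G → G → ℝ)
    (hval : ∀ p q, σ p q = 1 ∨ σ p q = -1)
    (hproper : ∀ p q : G, σ p q * σ q q⁻¹ = σ (p * q) q⁻¹ ∧ σ p⁻¹ p * σ p q = σ p⁻¹ (p * q))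
    (x : G → ℝ) (p : G) (hp : p = p⁻¹) :
    (1 - σ p p) * ip x (tmul σ (ib p) x) = 0 ∧
    (σ p p = -1 → ip x (tmul σ (ib p) x) = 0) := by
  set S := ip x (tmul σ (ib p) x) with hS
  have hT : S = ∑ r : G, σ p (p⁻¹ * r) * x r * x (p⁻¹ * r) := by
    simp only [hS, ip, tmul, ib]
    refine Finset.sum_congr rfl fun r _ => ?_
    rw [Finset.sum_eq_single p]
    · simp; ring
    · intro q _ hq; simp [hq]
    · simp
  have hkey : S = σ p p * S := by
    rw [hT, Finset.mul_sum]
    refine Fintype.sum_equiv (Equiv.mulLeft p) _ _ fun r => ?_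
    simp only [Equiv.coe_mulLeft]
    have h2 := (hproper p r).2
    rw [← hp] at h2
    have hpp : p * p = 1 := by nth_rewrite 2 [hp]; exact mul_inv_cancel p
    rw [← hp, show p * (p * r) = r from by
      rw [← mul_assoc, hpp, one_mul], ← h2]
    ring
  constructor
  · nlinarith [hkey]
  · intro h
    rw [h] at hkey
    linarith
end

section
/- The Cayley-Dickson twist γ on the group (ℕ, xor) defined recursively by γ(0,0)=1, γ(2r,2s)=γ(r,s), γ(2r,2s+1) = -γ(r,s) for r ≠ 0, γ(0,2s+1)=1, γ(2r+1,2s)=γ(s,r), γ(2r+1,2s+1)=γ(s,r) for r ≠ 0, and γ(1,2s+1) = -1, satisfies γ(p,p) = -1 for all p ≠ 0. -/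
/-- The Cayley–Dickson twist on ℕ (group operation: bitwise xor), defined by the
recursion γ(0,0)=1, γ(2r,2s)=γ(r,s), γ(2r,2s+1)=-γ(r,s) for r≠0, γ(0,2s+1)=1,
γ(2r+1,2s)=γ(s,r), γ(2r+1,2s+1)=γ(s,r) for r≠0, γ(1,2s+1)=-1. -/
def cd (p q : ℕ) : ℤ :=
  if hp2 : p % 2 = 0 then
    if hq2 : q % 2 = 0 then
      if hpq : p = 0 ∧ q = 0 then 1
      else cd (p / 2) (q / 2)
    else
      if hp : p = 0 then 1 else -cd (p / 2) (q / 2)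
  else
    if hq2 : q % 2 = 0 then cd (q / 2) (p / 2)
    else if hp : p = 1 then -1 else cd (q / 2) (p / 2)
termination_by p + q
decreasing_by all_goals omega

theorem stmt13 : ∀ p : ℕ, p ≠ 0 → cd p p = -1 := by
  intro p
  induction p using Nat.strong_induction_on with
  | _ p ih =>
    intro hp
    rw [cd]
    by_cases h2 : p % 2 = 0
    · simp only [h2, dif_pos]
      rw [dif_neg (by omega : ¬(p = 0 ∧ p = 0))]
      exact ih (p / 2) (by omega) (by omega)
    · simp only [h2, dif_neg]
      by_cases h1 : p = 1
      · simp [h1]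
      · rw [dif_neg h1]
        exact ih (p / 2) (by omega) (by omega)
end

section
/- The Cayley-Dickson twist γ satisfies γ(p,q) = -γ(q,p) whenever p, q are distinct nonzero elements of (ℕ, xor). -/
lemma cd_zero : ∀ m : ℕ, cd 0 m = 1 := by
  intro m
  induction m using Nat.strong_induction_on with
  | _ m ih =>
    rw [cd]
    split_ifs with h1 h2 h3 <;> first | rfl | omega | exact ih (m / 2) (by omega)

theorem stmt14 : ∀ p q : ℕ, p ≠ 0 → q ≠ 0 → p ≠ q → cd p q = -cd q p := by
  have key : ∀ n p q : ℕ, p + q ≤ n → p ≠ 0 → q ≠ 0 → p ≠ q → cd p q = -cd q p := by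
    intro n
    induction n with
    | zero => intro p q h hp hq hpq; omega
    | succ n ih =>
      intro p q hle hp hq hpq
      conv_lhs => rw [cd]
      conv_rhs => rw [cd]
      split_ifs with h1 h2 h3 h4 h5 h6 h7 h8 h9 <;>
        first
        | omega
        | rfl
        | (apply ih <;> omega)
        | (subst h7; norm_num [cd_zero])
        | (subst h9; norm_num [cd_zero])
  intro p q; exact key (p + q) p q le_rfl
end

section
/- The Cayley-Dickson twist γ is proper: for all nonnegative integers p,q (with group operation bitwise xor, so each element is its own inverse), γ(p,q)γ(q,q) = γ(p xor q, q) and γ(p,p)γ(p,q) = γ(p, p xor q). -/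
/-!
Write `δ(p) = γ(p, p)`, so `δ(0) = 1` and `δ(p) = -1` for `p ≠ 0`. With this notation the
recursion becomes the unconditional doubling formula
`γ(2r, 2s) = γ(r, s)`, `γ(2r, 2s+1) = δ(r) γ(r, s)`, `γ(2r+1, 2s) = γ(s, r)`,
`γ(2r+1, 2s+1) = -δ(r) γ(s, r)`,
and all values are `±1`. By induction on `p + q` one gets the commutation rule
`γ(a, b) γ(b, a) = δ(a) δ(b) δ(a ⊕ b)` and the left rule `δ(p) γ(p, q) = γ(p, p ⊕ q)`; the
commutation rule turns the left rule at `(q, p)` into the right rule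
`γ(p, q) δ(q) = γ(p ⊕ q, q)`, which the induction for the left rule also needs at smaller
arguments.
-/

namespace Nat

theorem two_mul_xor_two_mul (a b : ℕ) : 2 * a ^^^ 2 * b = 2 * (a ^^^ b) := by
  simpa [bit_val, mul_comm] using xor_bit false a false b

theorem two_mul_xor_two_mul_add_one (a b : ℕ) : 2 * a ^^^ (2 * b + 1) = 2 * (a ^^^ b) + 1 := by
  simpa [bit_val, mul_comm] using xor_bit false a true b

theorem two_mul_add_one_xor_two_mul (a b : ℕ) : (2 * a + 1) ^^^ 2 * b = 2 * (a ^^^ b) + 1 := by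
  simpa [bit_val, mul_comm] using xor_bit true a false b

theorem two_mul_add_one_xor_two_mul_add_one (a b : ℕ) :
    (2 * a + 1) ^^^ (2 * b + 1) = 2 * (a ^^^ b) := by
  simpa [bit_val, mul_comm] using xor_bit true a true b

end Nat

theorem cd_zero_zero : cd 0 0 = 1 := by
  rw [cd]; simp

theorem cd_even_even (r s : ℕ) : cd (2 * r) (2 * s) = cd r s := by
  rw [cd]
  rcases eq_or_ne r 0 with rfl | hr
  · rcases eq_or_ne s 0 with rfl | hs
    · simp [cd_zero_zero]
    · simp [hs]
  · simp [hr]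

theorem cd_odd_even (r s : ℕ) : cd (2 * r + 1) (2 * s) = cd s r := by
  rw [cd]; simp [show (2 * r + 1) / 2 = r by omega]

theorem cd_zero_left (q : ℕ) : cd 0 q = 1 := by
  obtain ⟨s, rfl | rfl⟩ := Nat.even_or_odd' q
  · rcases eq_or_ne s 0 with rfl | hs
    · exact cd_zero_zero
    · simpa using (cd_even_even 0 s).trans (cd_zero_left s)
  · rw [cd]; simp

theorem cd_zero_right (p : ℕ) : cd p 0 = 1 := by
  obtain ⟨r, rfl | rfl⟩ := Nat.even_or_odd' p
  · rcases eq_or_ne r 0 with rfl | hr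
    · exact cd_zero_zero
    · simpa using (cd_even_even r 0).trans (cd_zero_right r)
  · simpa using (cd_odd_even r 0).trans (cd_zero_left r)

theorem cd_diag_of_ne_zero {q : ℕ} (hq : q ≠ 0) : cd q q = -1 := by
  obtain ⟨s, rfl | rfl⟩ := Nat.even_or_odd' q
  · rw [cd_even_even]; exact cd_diag_of_ne_zero (by omega)
  · rw [cd]
    rcases eq_or_ne s 0 with rfl | hs
    · simp
    · simpa [show (2 * s + 1) / 2 = s by omega, hs] using cd_diag_of_ne_zero hs

theorem cd_even_odd (r s : ℕ) : cd (2 * r) (2 * s + 1) = cd r r * cd r s := by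
  rcases eq_or_ne r 0 with rfl | hr
  · simp [cd_zero_left]
  · rw [cd, cd_diag_of_ne_zero hr]; simp [show (2 * s + 1) / 2 = s by omega, hr]

theorem cd_odd_odd (r s : ℕ) : cd (2 * r + 1) (2 * s + 1) = -(cd r r * cd s r) := by
  rw [cd]
  rcases eq_or_ne r 0 with rfl | hr
  · simp [cd_zero_right]
  · simp [show ∀ n, (2 * n + 1) / 2 = n by omega, hr, cd_diag_of_ne_zero hr]

theorem cd_sq (p q : ℕ) : cd p q ^ 2 = 1 := by
  rcases eq_or_ne p 0 with rfl | hp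
  · simp [cd_zero_left]
  obtain ⟨a, rfl | rfl⟩ := Nat.even_or_odd' p <;> obtain ⟨b, rfl | rfl⟩ := Nat.even_or_odd' q
  · rw [cd_even_even]; exact cd_sq a b
  · rw [cd_even_odd, mul_pow, cd_sq a a, cd_sq a b, one_mul]
  · rw [cd_odd_even]; exact cd_sq b a
  · rw [cd_odd_odd, neg_sq, mul_pow, cd_sq a a, cd_sq b a, one_mul]
termination_by p + q

theorem cd_mul_cd_swap (a b : ℕ) :
    cd a b * cd b a = cd a a * cd b b * cd (a ^^^ b) (a ^^^ b) := by
  rcases eq_or_ne a 0 with rfl | ha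
  · rw [cd_zero_left, cd_zero_right, cd_zero_zero, Nat.zero_xor]
    linear_combination -cd_sq b b
  obtain ⟨r, rfl | rfl⟩ := Nat.even_or_odd' a <;> obtain ⟨s, rfl | rfl⟩ := Nat.even_or_odd' b
  · simp only [Nat.two_mul_xor_two_mul, cd_even_even]
    exact cd_mul_cd_swap r s
  · rw [Nat.two_mul_xor_two_mul_add_one, cd_even_odd, cd_odd_even, cd_even_even,
      cd_diag_of_ne_zero (by omega : 2 * s + 1 ≠ 0),
      cd_diag_of_ne_zero (by omega : 2 * (r ^^^ s) + 1 ≠ 0)]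
    linear_combination cd r r * cd_sq r s
  · rw [Nat.two_mul_add_one_xor_two_mul, cd_even_odd, cd_odd_even, cd_even_even,
      cd_diag_of_ne_zero (by omega : 2 * r + 1 ≠ 0),
      cd_diag_of_ne_zero (by omega : 2 * (r ^^^ s) + 1 ≠ 0)]
    linear_combination cd s s * cd_sq s r
  · rw [Nat.two_mul_add_one_xor_two_mul_add_one, cd_odd_odd, cd_odd_odd, cd_even_even,
      cd_diag_of_ne_zero (by omega : 2 * r + 1 ≠ 0), cd_diag_of_ne_zero (by omega : 2 * s + 1 ≠ 0)]
    linear_combination cd r r * cd s s * cd_mul_cd_swap r s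
      + cd (r ^^^ s) (r ^^^ s) * (cd s s ^ 2 * cd_sq r r + cd_sq s s)
termination_by a + b

theorem cd_swap (a b : ℕ) : cd b a = cd a b * (cd a a * cd b b * cd (a ^^^ b) (a ^^^ b)) := by
  linear_combination cd a b * cd_mul_cd_swap a b - cd b a * cd_sq a b

theorem cd_mul_diag_of_diag_mul {p q : ℕ} (h : cd q q * cd q p = cd q (q ^^^ p)) :
    cd p q * cd q q = cd (p ^^^ q) q := by
  rw [cd_swap q (p ^^^ q), Nat.xor_comm p q, Nat.xor_xor_cancel_left, ← h, cd_swap p q,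
    Nat.xor_comm p q]
  linear_combination (-cd p q * cd q q) * (cd p p ^ 2 * cd (q ^^^ p) (q ^^^ p) ^ 2 * cd_sq q q
    + cd (q ^^^ p) (q ^^^ p) ^ 2 * cd_sq p p + cd_sq (q ^^^ p) (q ^^^ p))

theorem cd_diag_mul (p q : ℕ) : cd p p * cd p q = cd p (p ^^^ q) := by
  rcases eq_or_ne p 0 with rfl | hp
  · rw [cd_zero_zero, Nat.zero_xor, one_mul]
  obtain ⟨a, rfl | rfl⟩ := Nat.even_or_odd' p <;> obtain ⟨b, rfl | rfl⟩ := Nat.even_or_odd' q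
  · simp only [Nat.two_mul_xor_two_mul, cd_even_even]
    exact cd_diag_mul a b
  · rw [Nat.two_mul_xor_two_mul_add_one, cd_even_even, cd_even_odd, cd_even_odd,
      ← cd_diag_mul a b]
  · have h := cd_mul_diag_of_diag_mul (cd_diag_mul a b)
    rw [Nat.two_mul_add_one_xor_two_mul, cd_odd_odd, cd_odd_even, cd_odd_odd, Nat.xor_comm a b,
      ← h]
    ring
  · have h := cd_mul_diag_of_diag_mul (cd_diag_mul a b)
    rw [Nat.two_mul_add_one_xor_two_mul_add_one, cd_odd_odd, cd_odd_odd, cd_odd_even,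
      Nat.xor_comm a b, ← h]
    linear_combination cd a a * cd b a * cd_sq a a
termination_by p + q

theorem stmt15 : ∀ p q : ℕ,
    cd p q * cd q q = cd (p ^^^ q) q ∧ cd p p * cd p q = cd p (p ^^^ q) :=
  fun p q => ⟨cd_mul_diag_of_diag_mul (cd_diag_mul q p), cd_diag_mul p q⟩
end

section
/- The Clifford twist χ on nonnegative integers under xor, defined recursively by χ(0,0)=1, χ(2p,2q)=χ(2p+1,2q)=χ(p,q), and χ(2p,2q+1)=χ(2p+1,2q+1)=(-1)^{s(p)}χ(p,q) (where s(p) is the number of 1-bits of p), is an associative twist: χ(p,q)χ(p xor q, r) = χ(p, q xor r)χ(q,r) for all p,q,r. -/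
/-- `sob n` is the sum of the binary digits (popcount) of `n`. -/
def sob (n : ℕ) : ℕ :=
  if n = 0 then 0 else sob (n / 2) + n % 2
termination_by n
decreasing_by omega

/-- The Clifford twist on ℕ (group operation: bitwise xor), defined by the recursion
χ(0,0)=1, χ(2p,2q)=χ(2p+1,2q)=χ(p,q), χ(2p,2q+1)=χ(2p+1,2q+1)=(-1)^{s(p)}·χ(p,q). -/
def clf (p q : ℕ) : ℤ :=
  if hpq : p = 0 ∧ q = 0 then 1
  else if hq2 : q % 2 = 0 then clf (p / 2) (q / 2)
  else (-1) ^ sob (p / 2) * clf (p / 2) (q / 2)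
termination_by p + q
decreasing_by all_goals omega

lemma xor_div_two (p q : ℕ) : (p ^^^ q) / 2 = p / 2 ^^^ q / 2 := by
  apply Nat.eq_of_testBit_eq; intro i
  simp [Nat.testBit_div_two]

lemma sob_eq (n : ℕ) : sob n = sob (n / 2) + n % 2 := by
  rw [sob]
  split
  · subst ‹n = 0›; rw [sob]; simp
  · rfl

lemma sob_xor (p q : ℕ) : sob (p ^^^ q) % 2 = (sob p + sob q) % 2 := by
  induction p using Nat.strong_induction_on generalizing q with
  | _ p ih =>
    rcases Nat.eq_zero_or_pos p with h | h
    · subst h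
      have h0 : sob 0 = 0 := by rw [sob]; simp
      simp [h0]
    rw [sob_eq (p ^^^ q), sob_eq p, sob_eq q, xor_div_two, Nat.xor_mod_two_eq]
    have := ih (p / 2) (by omega) (q / 2)
    omega

lemma clf_eq (p q : ℕ) :
    clf p q = (-1) ^ (sob (p / 2) * (q % 2)) * clf (p / 2) (q / 2) := by
  rw [clf]
  split
  · obtain ⟨hp, hq⟩ := ‹_ ∧ _›; subst hp; subst hq
    rw [clf]; simp
  · split
    · rw [‹q % 2 = 0›]; simp
    · have : q % 2 = 1 := by omega
      rw [this, mul_one]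

lemma negpow (a b : ℕ) (h : a % 2 = b % 2) : (-1 : ℤ) ^ a = (-1) ^ b := by
  conv_lhs => rw [← Nat.div_add_mod a 2]
  conv_rhs => rw [← Nat.div_add_mod b 2]
  rw [pow_add, pow_add, pow_mul, pow_mul, h]
  norm_num

theorem stmt18 : ∀ p q r : ℕ,
    clf p q * clf (p ^^^ q) r = clf p (q ^^^ r) * clf q r := by
  suffices H : ∀ n p q r : ℕ, p + q + r = n →
      clf p q * clf (p ^^^ q) r = clf p (q ^^^ r) * clf q r by
    intro p q r; exact H _ p q r rfl
  intro n
  induction n using Nat.strong_induction_on with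
  | _ n ih =>
    intro p q r hn
    rcases Nat.eq_zero_or_pos n with h0 | h0
    · have hp : p = 0 := by omega
      have hq : q = 0 := by omega
      have hr : r = 0 := by omega
      subst hp; subst hq; subst hr
      simp [clf]
    subst hn
    rw [clf_eq p q, clf_eq (p ^^^ q) r, clf_eq p (q ^^^ r), clf_eq q r,
      xor_div_two, xor_div_two]
    have key := ih (p / 2 + q / 2 + r / 2) (by omega) (p / 2) (q / 2) (r / 2) rfl
    have hs := sob_xor (p / 2) (q / 2)
    have hsign : (-1 : ℤ) ^ (sob (p / 2) * (q % 2)) *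
        (-1) ^ (sob (p / 2 ^^^ q / 2) * (r % 2)) =
        (-1) ^ (sob (p / 2) * ((q ^^^ r) % 2)) * (-1) ^ (sob (q / 2) * (r % 2)) := by
      rw [← pow_add, ← pow_add]
      apply negpow
      have := Nat.xor_mod_two_eq (m := q) (n := r)
      have h2 : (q ^^^ r) % 2 = (q % 2 + r % 2) % 2 := by omega
      rcases Nat.mod_two_eq_zero_or_one q with hq | hq <;>
        rcases Nat.mod_two_eq_zero_or_one r with hr | hr <;>
        simp [hq, hr, h2] at * <;> omega
    calc (-1 : ℤ) ^ (sob (p / 2) * (q % 2)) * clf (p / 2) (q / 2) *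
          ((-1) ^ (sob (p / 2 ^^^ q / 2) * (r % 2)) * clf (p / 2 ^^^ q / 2) (r / 2))
        = ((-1 : ℤ) ^ (sob (p / 2) * (q % 2)) * (-1) ^ (sob (p / 2 ^^^ q / 2) * (r % 2))) *
          (clf (p / 2) (q / 2) * clf (p / 2 ^^^ q / 2) (r / 2)) := by ring
      _ = ((-1) ^ (sob (p / 2) * ((q ^^^ r) % 2)) * (-1) ^ (sob (q / 2) * (r % 2))) *
          (clf (p / 2) (q / 2 ^^^ r / 2) * clf (q / 2) (r / 2)) := by rw [hsign, key]
      _ = _ := by ring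
end

section
/- For the Clifford twist χ, χ(p,p) = (-1)^{T(s(p))} for every nonnegative integer p, where s(p) is the number of 1-bits of p and T(k) = k(k-1)/2 is the k-th triangular number. -/
lemma tri_succ (k : ℕ) : (k + 1) * k / 2 = k * (k - 1) / 2 + k := by
  have he : Even (k * (k - 1)) := by
    rcases Nat.even_or_odd k with h | h
    · exact h.mul_right _
    · rcases k with _ | m
      · simp
      · exact (Nat.Odd.sub_odd h odd_one).mul_left _
  have heq : (k + 1) * k = k * (k - 1) + 2 * k := by
    rcases k with _ | m
    · simp
    · simp only [Nat.succ_sub_one]; ring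
  obtain ⟨c, hc⟩ := he
  omega

theorem stmt19 : ∀ p : ℕ, clf p p = (-1) ^ (sob p * (sob p - 1) / 2) := by
  intro p
  induction p using Nat.strong_induction_on with
  | _ p ih =>
    rcases Nat.eq_zero_or_pos p with rfl | hp
    · rw [clf, sob]; simp
    rw [clf]
    have hih := ih (p / 2) (by omega)
    rcases Nat.even_or_odd p with he | ho
    · have h2 : p % 2 = 0 := Nat.even_iff.mp he
      have hs : sob p = sob (p / 2) := by
        rw [sob, if_neg (by omega)]; simp [h2]
      rw [dif_neg (by omega), dif_pos h2, hih, hs]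
    · have h2 : p % 2 = 1 := Nat.odd_iff.mp ho
      have hs : sob p = sob (p / 2) + 1 := by
        rw [sob, if_neg (by omega)]; simp [h2]
      rw [dif_neg (by omega), dif_neg (by omega), hih, hs,
        Nat.add_sub_cancel, tri_succ, pow_add]
      ring
end
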